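/- Let n ≥ 1 and let f(X) = X^{3^n−2} be the inverse function on F_{3^n}. If n is odd, the boomerang spectrum of f satisfies v_0 = (3^n−3)/2, v_1 = 0, v_2 = (3^n−3)/2, v_3 = 2, and v_i = 0 for all i ≥ 4. If n is even, the boomerang spectrum of f satisfies v_0 = (3^n−1)/2, v_1 = 2, v_2 = (3^n−9)/2, v_3 = 0, v_4 = 0, v_5 = 2, and v_i = 0 for all i ≥ 6. -/

import Mathlib

/-!
In characteristic 3 and for `b ≠ 0`, the boomerang system of `x ↦ x⁻¹` at `(1, b)` has the
solutions `(x, -1 - x)` with `(b x - b - 1)² = b² + 1`, plus three exceptional ones when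
`b = ±1`. Hence `B(1, b) = N(b² + 1) + 3 [b = ±1]`, where `N(c) ∈ {0, 1, 2}` is the number of
square roots of `c` and `N(c) = 1` only for `c = 0`. Counting the points of the hyperbola
`t² - b² = 1` gives `∑_b N(b² + 1) = q - 1`; together with `N(-1) = 2` or `0` according as `-1`
is a square (`n` even or odd), this determines `v₀, v₁, v₂` and the `v_i` for `i ≥ 3`.
-/

open Finset

/-- The `c`-DDT entry of `f` at `(a, b)`:
the number of `x` with `f (x + a) - c * f x = b`. -/
def cDDT {F : Type*} [Field F] [Fintype F] [DecidableEq F]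
    (f : F → F) (c a b : F) : ℕ :=
  (Finset.univ.filter (fun x : F => f (x + a) - c * f x = b)).card

/-- The `c`-differential uniformity of `f`: the maximum of the `c`-DDT entries
over all `a, b`, where `a ≠ 0` is required when `c = 1`. -/
def cDU {F : Type*} [Field F] [Fintype F] [DecidableEq F]
    (f : F → F) (c : F) : ℕ :=
  (Finset.univ.filter (fun ab : F × F => c = 1 → ab.1 ≠ 0)).sup
    (fun ab => cDDT f c ab.1 ab.2)

/-- The classical differential uniformity of `f`. -/
def DU {F : Type*} [Field F] [Fintype F] [DecidableEq F] (f : F → F) : ℕ :=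
  cDU f 1

/-- The BCT entry of `f` at `(a, b)`: the number of pairs `(x, y)` with
`f x - f y = b` and `f (x + a) - f (y + a) = b`. -/
def BCT {F : Type*} [Field F] [Fintype F] [DecidableEq F]
    (f : F → F) (a b : F) : ℕ :=
  (Finset.univ.filter (fun xy : F × F =>
    f xy.1 - f xy.2 = b ∧ f (xy.1 + a) - f (xy.2 + a) = b)).card

/-- The boomerang uniformity of `f`: the maximum of the BCT entries over all
nonzero `a, b`. -/
def BU {F : Type*} [Field F] [Fintype F] [DecidableEq F] (f : F → F) : ℕ :=
  (Finset.univ.filter (fun ab : F × F => ab.1 ≠ 0 ∧ ab.2 ≠ 0)).sup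
    (fun ab => BCT f ab.1 ab.2)

/-- The quadratic character: `χ 0 = 0`, `χ α = 1` if `α` is a nonzero square,
and `χ α = -1` otherwise. -/
noncomputable def chi {F : Type*} [Field F] (α : F) : ℤ :=
  letI := Classical.dec (α = 0)
  letI := Classical.dec (IsSquare α)
  if α = 0 then 0 else if IsSquare α then 1 else -1

/-- The `c`-differential spectrum entry `ω_i` of a power function:
the number of `b` with `cΔ_f(1, b) = i`. -/
def omegaSpec {F : Type*} [Field F] [Fintype F] [DecidableEq F]
    (f : F → F) (c : F) (i : ℕ) : ℕ :=
  (Finset.univ.filter (fun b : F => cDDT f c 1 b = i)).card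

/-- The boomerang spectrum entry `v_i` of a power function:
the number of nonzero `b` with `B_f(1, b) = i`. -/
def vSpec {F : Type*} [Field F] [Fintype F] [DecidableEq F]
    (f : F → F) (i : ℕ) : ℕ :=
  (Finset.univ.filter (fun b : F => b ≠ 0 ∧ BCT f 1 b = i)).card

section FiniteField

variable {F : Type*} [Field F] [Fintype F]

theorem pow_card_sub_two_eq_inv (hq : 2 < Fintype.card F) (x : F) :
    x ^ (Fintype.card F - 2) = x⁻¹ := by
  rcases eq_or_ne x 0 with rfl | hx
  · rw [inv_zero, zero_pow (by omega)]
  · refine eq_inv_of_mul_eq_one_left ?_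
    rw [← pow_succ, show Fintype.card F - 2 + 1 = Fintype.card F - 1 by omega,
      FiniteField.pow_card_sub_one_eq_one x hx]

variable [DecidableEq F]

theorem card_filter_sq_eq (hF : ringChar F ≠ 2) (c : F) :
    #{t : F | t ^ 2 = c} = if c = 0 then 1 else if IsSquare c then 2 else 0 := by
  have h := quadraticChar_card_sqrts hF c
  rw [quadraticChar_apply, quadraticCharFun, Set.toFinset_ofPred] at h
  split_ifs at h ⊢ <;> omega

theorem card_filter_sq_eq_le_two (hF : ringChar F ≠ 2) (c : F) : #{t : F | t ^ 2 = c} ≤ 2 := by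
  rw [card_filter_sq_eq hF]
  split_ifs <;> omega

theorem card_filter_sq_eq_neg_one (hF : ringChar F ≠ 2) :
    #{t : F | t ^ 2 = -1} = if Fintype.card F % 4 = 3 then 0 else 2 := by
  rw [card_filter_sq_eq hF, if_neg (neg_ne_zero.2 one_ne_zero)]
  simp only [FiniteField.isSquare_neg_one_iff, ite_not]

/-- `(t - b) (t + b) = 1`, so a point of the hyperbola `t² - b² = 1` is determined by
`t + b ≠ 0`. -/
theorem sum_card_filter_sq_eq_sq_add_one (hF : ringChar F ≠ 2) :
    ∑ b : F, #{t : F | t ^ 2 = b ^ 2 + 1} = Fintype.card F - 1 := by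
  have h2 : (2 : F) ≠ 0 := Ring.two_ne_zero hF
  calc ∑ b : F, #{t : F | t ^ 2 = b ^ 2 + 1} = #{p : F × F | p.2 ^ 2 = p.1 ^ 2 + 1} := by
        simp only [card_filter, Fintype.sum_prod_type]
    _ = #{u : F | u ≠ 0} := by
        refine card_nbij' (fun p => p.2 + p.1) (fun u => ((u - u⁻¹) / 2, (u + u⁻¹) / 2))
          ?_ ?_ ?_ ?_ <;>
          simp only [Set.MapsTo, Set.LeftInvOn, coe_filter, mem_univ, true_and, Set.mem_ofPred_eq]
        · grind
        · grind
        · rintro ⟨b, t⟩ h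
          refine Prod.ext ?_ ?_ <;> grind
        · grind
    _ = Fintype.card F - 1 := by
        rw [filter_ne', card_erase_of_mem (mem_univ _), card_univ]

end FiniteField

section Counting

variable {α : Type*} {s : Finset α} {g : α → ℕ}

theorem card_eq_card_filter_eq_zero_add_one_add_two (hg : ∀ a ∈ s, g a < 3) :
    #s = #{a ∈ s | g a = 0} + #{a ∈ s | g a = 1} + #{a ∈ s | g a = 2} := by
  rw [card_eq_sum_card_fiberwise (t := range 3) fun a ha => mem_range.2 (hg a ha)]
  simp [sum_range_succ]

theorem sum_eq_card_filter_eq_one_add_two_mul (hg : ∀ a ∈ s, g a < 3) :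
    ∑ a ∈ s, g a = #{a ∈ s | g a = 1} + 2 * #{a ∈ s | g a = 2} := by
  rw [← sum_fiberwise_of_maps_to (t := range 3) fun a ha => mem_range.2 (hg a ha)]
  simp [sum_range_succ, sum_const_nat fun a (ha : a ∈ s.filter _) => (mem_filter.1 ha).2,
    mul_comm]

end Counting

section CharThree

variable {F : Type*} [Field F] [CharP F 3]

variable (F) in
theorem ringChar_ne_two_of_charP_three : ringChar F ≠ 2 := by
  rw [ringChar.eq F 3]
  decide

/-- Off `x, y ∈ {0, -1}`, clearing denominators in both equations and subtracting gives
`b (x + y + 1) = 0`; with `y = -1 - x` the first equation becomes `b x² + (b + 1) x = 1`,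
i.e. `(b x - b - 1)² = b² + 1` in characteristic 3. -/
theorem inv_boomerang_system_iff {b x y : F} (hb : b ≠ 0) :
    (x⁻¹ - y⁻¹ = b ∧ (x + 1)⁻¹ - (y + 1)⁻¹ = b) ↔
      (y = -1 - x ∧ (b * x - b - 1) ^ 2 = b ^ 2 + 1) ∨
      ((b = 1 ∨ b = -1) ∧ (x = 0 ∧ y = -b ∨ x = b ∧ y = 0 ∨ x = -b ∧ y = b)) := by
  grind

variable [Fintype F] [DecidableEq F]

theorem card_inv_boomerang_generic {b : F} (hb : b ≠ 0) :
    #{xy : F × F | xy.2 = -1 - xy.1 ∧ (b * xy.1 - b - 1) ^ 2 = b ^ 2 + 1} =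
      #{t : F | t ^ 2 = b ^ 2 + 1} := by
  refine card_nbij' (fun xy => b * xy.1 - b - 1)
    (fun t => ((t + b + 1) / b, -1 - (t + b + 1) / b)) ?_ ?_ ?_ ?_ <;>
    simp only [Set.MapsTo, Set.LeftInvOn, coe_filter, mem_univ, true_and, Set.mem_ofPred_eq]
  · grind
  · intro t ht
    field_simp
    grind
  · rintro ⟨x, y⟩ ⟨hy, -⟩
    refine Prod.ext ?_ ?_ <;> dsimp only at hy ⊢ <;> field_simp <;> grind
  · intro t _
    field_simp
    ring

theorem card_inv_boomerang_exceptional {b : F} (hb : b ≠ 0) :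
    #{xy : F × F | (b = 1 ∨ b = -1) ∧
        (xy.1 = 0 ∧ xy.2 = -b ∨ xy.1 = b ∧ xy.2 = 0 ∨ xy.1 = -b ∧ xy.2 = b)} =
      if b = 1 ∨ b = -1 then 3 else 0 := by
  split_ifs with h
  · rw [card_eq_three]
    exact ⟨(0, -b), (b, 0), (-b, b), by grind [Prod.ext_iff], by grind [Prod.ext_iff],
      by grind [Prod.ext_iff], by ext; grind⟩
  · simp [h]

theorem BCT_inv_one {b : F} (hb : b ≠ 0) :
    BCT (fun x : F => x⁻¹) 1 b =
      if b = 1 ∨ b = -1 then 3 + #{t : F | t ^ 2 = -1} else #{t : F | t ^ 2 = b ^ 2 + 1} := by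
  rw [BCT, filter_congr fun xy _ => inv_boomerang_system_iff hb, filter_or,
    card_union_of_disjoint (disjoint_filter.2 fun xy _ _ => by grind),
    card_inv_boomerang_generic hb, card_inv_boomerang_exceptional hb]
  split_ifs with h
  · rw [show b ^ 2 + 1 = -1 by grind, add_comm]
  · rfl

theorem vSpec_inv_of_lt_three {i : ℕ} (hi : i < 3) :
    vSpec (fun x : F => x⁻¹) i =
      #{b ∈ ({0, 1, -1} : Finset F)ᶜ | #{t : F | t ^ 2 = b ^ 2 + 1} = i} := by
  rw [vSpec]
  congr 1
  ext b
  simp only [mem_filter, mem_univ, true_and, mem_compl, mem_insert, mem_singleton, not_or]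
  by_cases hb : b = 0
  · simp [hb]
  · rw [BCT_inv_one hb]
    by_cases h : b = 1 ∨ b = -1 <;> simp only [h, if_true, if_false] <;> grind

theorem vSpec_inv_of_three_le {i : ℕ} (hi : 3 ≤ i) :
    vSpec (fun x : F => x⁻¹) i = if i = 3 + #{t : F | t ^ 2 = -1} then 2 else 0 := by
  have hmem (b : F) : (b ≠ 0 ∧ BCT (fun x : F => x⁻¹) 1 b = i) ↔
      (b = 1 ∨ b = -1) ∧ i = 3 + #{t : F | t ^ 2 = -1} := by
    by_cases hb : b = 0
    · grind
    have := card_filter_sq_eq_le_two (ringChar_ne_two_of_charP_three F) (b ^ 2 + 1)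
    rw [BCT_inv_one hb]
    split_ifs with h <;> grind
  rw [vSpec, filter_congr fun b _ => hmem b]
  split_ifs with h
  · simp only [h, and_true]
    rw [card_eq_two]
    exact ⟨1, -1, by grind, by ext; simp⟩
  · simp [h]

theorem vSpec_inv_one : vSpec (fun x : F => x⁻¹) 1 = #{t : F | t ^ 2 = -1} := by
  rw [vSpec_inv_of_lt_three (by norm_num)]
  congr 1
  ext b
  simp only [mem_filter, mem_univ, true_and, mem_compl, mem_insert, mem_singleton,
    card_filter_sq_eq (ringChar_ne_two_of_charP_three F)]
  split_ifs <;> grind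

theorem vSpec_inv_zero_add_one_add_two :
    vSpec (fun x : F => x⁻¹) 0 + vSpec (fun x : F => x⁻¹) 1 + vSpec (fun x : F => x⁻¹) 2 =
      Fintype.card F - 3 := by
  have hD : #({0, 1, -1} : Finset F) = 3 :=
    card_eq_three.2 ⟨0, 1, -1, by simp, by simp, by grind, rfl⟩
  rw [vSpec_inv_of_lt_three (by norm_num), vSpec_inv_of_lt_three (by norm_num),
    vSpec_inv_of_lt_three (by norm_num), ← card_eq_card_filter_eq_zero_add_one_add_two
      fun b _ => (card_filter_sq_eq_le_two (ringChar_ne_two_of_charP_three F) _).trans_lt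
        (by norm_num), card_compl, hD]

theorem vSpec_inv_one_add_two_mul_two :
    vSpec (fun x : F => x⁻¹) 1 + 2 * vSpec (fun x : F => x⁻¹) 2 +
      2 * #{t : F | t ^ 2 = -1} + 2 = Fintype.card F - 1 := by
  have hF := ringChar_ne_two_of_charP_three F
  have htotal := sum_compl_add_sum ({0, 1, -1} : Finset F) fun b => #{t : F | t ^ 2 = b ^ 2 + 1}
  have h0 : #{t : F | t ^ 2 = 0 ^ 2 + 1} = 2 := by rw [card_filter_sq_eq hF]; simp
  rw [sum_card_filter_sq_eq_sq_add_one hF, sum_insert (by simp), sum_pair (by grind), h0,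
    show (1 : F) ^ 2 + 1 = -1 by grind, show (-1 : F) ^ 2 + 1 = -1 by grind,
    sum_eq_card_filter_eq_one_add_two_mul
      fun b _ => (card_filter_sq_eq_le_two hF _).trans_lt (by norm_num)] at htotal
  rw [vSpec_inv_of_lt_three (by norm_num), vSpec_inv_of_lt_three (by norm_num)]
  omega

theorem card_filter_sq_eq_neg_one_of_card_eq_three_pow {n : ℕ} (hq : Fintype.card F = 3 ^ n) :
    #{t : F | t ^ 2 = -1} = if Even n then 2 else 0 := by
  rw [card_filter_sq_eq_neg_one (ringChar_ne_two_of_charP_three F), hq]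
  rcases n.even_or_odd with ⟨k, rfl⟩ | ⟨k, rfl⟩ <;>
    simp [pow_add, pow_mul, Nat.mul_mod, Nat.pow_mod, ← two_mul]

end CharThree

theorem boomerang_spectrum_inverse_char_three (n : ℕ) (hn : 1 ≤ n)
    {F : Type*} [Field F] [Fintype F] [DecidableEq F]
    (hF : Fintype.card F = 3 ^ n)
    (f : F → F) (hf : ∀ x : F, f x = x ^ (3 ^ n - 2)) :
    (Odd n →
      vSpec f 0 = (3 ^ n - 3) / 2 ∧ vSpec f 1 = 0 ∧ vSpec f 2 = (3 ^ n - 3) / 2 ∧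
      vSpec f 3 = 2 ∧ ∀ i : ℕ, 4 ≤ i → vSpec f i = 0) ∧
    (Even n →
      vSpec f 0 = (3 ^ n - 1) / 2 ∧ vSpec f 1 = 2 ∧ vSpec f 2 = (3 ^ n - 9) / 2 ∧
      vSpec f 3 = 0 ∧ vSpec f 4 = 0 ∧ vSpec f 5 = 2 ∧
      ∀ i : ℕ, 6 ≤ i → vSpec f i = 0) := by
  have : CharP F 3 := charP_of_card_eq_prime_pow hF
  have hq : 3 ≤ 3 ^ n := Nat.le_self_pow (by omega) 3
  obtain rfl : f = fun x => x⁻¹ :=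
    funext fun x => by rw [hf, ← hF, pow_card_sub_two_eq_inv (by omega)]
  have hv1 := vSpec_inv_one (F := F)
  have hv012 := vSpec_inv_zero_add_one_add_two (F := F)
  have hv12 := vSpec_inv_one_add_two_mul_two (F := F)
  have hbig (i : ℕ) (hi : 3 ≤ i) := vSpec_inv_of_three_le (F := F) hi
  simp only [card_filter_sq_eq_neg_one_of_card_eq_three_pow hF, hF] at hv1 hv012 hv12 hbig
  refine ⟨fun hodd => ?_, fun heven => ?_⟩
  · simp only [Nat.not_even_iff_odd.2 hodd, if_false] at hv1 hv12 hbig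
    exact ⟨by omega, hv1, by omega, by simpa using hbig 3 le_rfl,
      fun i hi => by simpa [show i ≠ 3 by omega] using hbig i (by omega)⟩
  · simp only [heven, if_true] at hv1 hv12 hbig
    refine ⟨by omega, hv1, by omega, ?_, ?_, by simpa using hbig 5 (by norm_num), ?_⟩
    · simpa using hbig 3 le_rfl
    · simpa using hbig 4 (by norm_num)
    · exact fun i hi => by simpa [show i ≠ 5 by omega] using hbig i (by omega)
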